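/- arXiv:1912.11845 — 3 statements merged into one kernel-verified Lean document; each statement's English description precedes it below -/
import Mathlib

section
/- In ℚ[[x]] one has c∘( -x(1-x)·(c∘(x - x²))³ ) = 1 - x, i.e. substituting -x(1-x)·c(x(1-x))³ into the Catalan generating function c yields 1 - x. -/
open PowerSeries Finset

/-- Substitution `f ∘ h` of a power series `h` (intended to have zero constant
term) into a power series `f`: the coefficient of `xⁿ` is
`∑_{k=0}^{n} f_k · [xⁿ](hᵏ)`. -/
noncomputable def PowerSeries.comp {R : Type*} [CommSemiring R]
    (f h : PowerSeries R) : PowerSeries R :=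
  PowerSeries.mk fun n => ∑ k ∈ Finset.range (n + 1),
    (PowerSeries.coeff k f) * (PowerSeries.coeff n (h ^ k))

/-!
Substitution `x ↦ h` is a ring homomorphism, so `u = c(x - x²)` satisfies `u = 1 + (x - x²) u²`.
An equation `y = A + x B y²` has at most one solution, since the difference of two solutions is
killed by the unit `1 - x B (y + z)`; this forces `(1 - x) u = 1`. Then `c(-x(1 - x) u³)` and
`1 - x` both solve `y = 1 - x (1 - x) u³ y²`, because `x (1 - x)³ u³ = x`.
-/

namespace PowerSeries

variable {R : Type*} [CommRing R]

theorem coeff_pow_eq_zero_of_lt {h : R⟦X⟧} (hh : constantCoeff h = 0) {n k : ℕ} (hnk : n < k) :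
    coeff n (h ^ k) = 0 :=
  X_pow_dvd_iff.mp (pow_dvd_pow_of_dvd (X_dvd_iff.mpr hh) k) n hnk

theorem comp_eq_subst {f h : R⟦X⟧} (hh : constantCoeff h = 0) : f.comp h = f.subst h := by
  ext n
  have hsupp : (Function.support fun d ↦ coeff d f • coeff n (h ^ d)) ⊆ ↑(range (n + 1)) := by
    intro d hd
    rw [coe_range, Set.mem_Iio]
    by_contra! hnd
    exact hd (by simp only [coeff_pow_eq_zero_of_lt hh hnd, smul_zero])
  rw [coeff_subst' (HasSubst.of_constantCoeff_zero' hh), finsum_eq_sum_of_support_subset _ hsupp,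
    comp, coeff_mk]
  simp only [smul_eq_mul]

theorem comp_eq_one_add_mul_comp_sq {c h : R⟦X⟧} (hc : c = 1 + X * c ^ 2)
    (hh : constantCoeff h = 0) : c.comp h = 1 + h * c.comp h ^ 2 := by
  have hsubst := HasSubst.of_constantCoeff_zero' hh
  rw [comp_eq_subst hh]
  conv_lhs => rw [hc]
  rw [← coe_substAlgHom hsubst, map_add, map_one, map_mul, map_pow, coe_substAlgHom hsubst,
    subst_X hsubst]

theorem eq_of_eq_add_X_mul_mul_sq {A B y z : R⟦X⟧} (hy : y = A + X * B * y ^ 2)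
    (hz : z = A + X * B * z ^ 2) : y = z := by
  have hunit : IsUnit (1 - X * B * (y + z)) := by
    rw [isUnit_iff_constantCoeff]
    simp
  have hprod : (1 - X * B * (y + z)) * (y - z) = 0 := by
    linear_combination hy - hz
  exact sub_eq_zero.mp (hunit.mul_right_eq_zero.mp hprod)

end PowerSeries

theorem stmt2_general (c : PowerSeries ℚ)
    (hc : c = 1 + PowerSeries.X * c ^ 2) :
    PowerSeries.comp c
        (-(PowerSeries.X * (1 - PowerSeries.X)) *
          (PowerSeries.comp c (PowerSeries.X - PowerSeries.X ^ 2)) ^ 3) =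
      1 - PowerSeries.X := by
  set u := c.comp (X - X ^ 2)
  have hu : u = 1 + (X - X ^ 2) * u ^ 2 := comp_eq_one_add_mul_comp_sq hc (by simp)
  have hu_inv : (1 - X) * u = 1 :=
    eq_of_eq_add_X_mul_mul_sq (A := 1 - X) (B := 1)
      (by linear_combination (1 - X) * hu) (by ring)
  set v := c.comp (-(X * (1 - X)) * u ^ 3)
  have hv : v = 1 + -(X * (1 - X)) * u ^ 3 * v ^ 2 := comp_eq_one_add_mul_comp_sq hc (by simp)
  refine eq_of_eq_add_X_mul_mul_sq (A := 1) (B := -((1 - X) * u ^ 3)) (by linear_combination hv) ?_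
  linear_combination (X * (((1 - X) * u) ^ 2 + (1 - X) * u + 1)) * hu_inv

/-- Substituting `-x(1-x)·c(x(1-x))³` into the Catalan generating function `c`
yields `1 - x`. -/
theorem stmt2 (c : PowerSeries ℚ) (hc0 : PowerSeries.constantCoeff c = 1)
    (hc : c = 1 + PowerSeries.X * c ^ 2) :
    PowerSeries.comp c
        (-(PowerSeries.X * (1 - PowerSeries.X)) *
          (PowerSeries.comp c (PowerSeries.X - PowerSeries.X ^ 2)) ^ 3) =
      1 - PowerSeries.X :=
  stmt2_general c hc
end

section
/- Work over the polynomial ring ℚ[y]. Let M_{n,k} ∈ ℚ[y] be the coefficient of xⁿ in (1 + yx + yx²)·(1+x)⁻² · (x·(1+x)⁻²)^k, the entries of the Riordan array ((1+yx+yx²)/(1+x)², x/(1+x)²). Let (μ_n)_{n≥0} be the unique sequence in ℚ[y] satisfying ∑_{k=0}^{n} M_{n,k}·μ_k = δ_{n,0} for all n (the first column of the inverse matrix, i.e. the moment sequence). Then for every n, μ_n = ∑_{k=0}^{n} t_{n,k}·y^k, where t_{n,k} ∈ ℚ is the coefficient of xⁿ in c²·(-x·c³)^k. That is, the coefficient array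 of the moments of the generalized Chebyshev polynomials defined by ((1+yx+yx²)/(1+x)², x/(1+x)²) is the Riordan involution (c², -x·c³). -/
/-!
The Riordan array `(G, F)` acts on generating functions by `a ↦ G · a(F)`. Since
`F = x/(1+x)²` is the compositional inverse of `x c²`, substituting `F` into `c` gives `1 + x`;
hence the series `W = c² / (1 + y x c³)` becomes `(1+x)² / (1 + y x (1+x))` under the
substitution, and `G · W(F) = 1` because `(1+x)² G = 1 + y x (1+x)`. The array is
unitriangular, so the moments are the coefficients of `W`, and expanding `W` geometrically in
`y x c³` gives exactly the entries of `(c², -x c³)`.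
-/

open PowerSeries Finset

namespace PowerSeries

variable {R : Type*} [CommRing R]

theorem eq_zero_of_eq_mul_of_X_dvd {u d : R⟦X⟧} (hu : X ∣ u) (h : d = u * d) : d = 0 := by
  have hdvd : ∀ k, X ^ k ∣ d := by
    intro k
    induction k with
    | zero => exact one_dvd d
    | succ k ih => rw [h, pow_succ']; exact mul_dvd_mul hu ih
  ext n
  simpa using X_pow_dvd_iff.mp (hdvd (n + 1)) n n.lt_succ_self

theorem eq_of_eq_add_mul_sq {F a g h : R⟦X⟧} (hF : X ∣ F) (hg : g = a + F * g ^ 2)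
    (hh : h = a + F * h ^ 2) : g = h := by
  refine sub_eq_zero.mp (eq_zero_of_eq_mul_of_X_dvd (dvd_mul_of_dvd_left hF (g + h)) ?_)
  linear_combination hg - hh

theorem coeff_mul_X_mul_pow_self (G u : R⟦X⟧) (n : ℕ) :
    coeff n (G * (X * u) ^ n) = constantCoeff G * constantCoeff u ^ n := by
  rw [mul_pow, mul_left_comm, coeff_X_pow_mul', if_pos le_rfl, Nat.sub_self,
    coeff_zero_eq_constantCoeff_apply, map_mul, map_pow]

theorem X_pow_dvd_subst_sub_sum {F : R⟦X⟧} (hF : X ∣ F) (f : R⟦X⟧) (n : ℕ) :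
    X ^ (n + 1) ∣ subst F f - ∑ k ∈ range (n + 1), C (coeff k f) * F ^ k := by
  have hs : HasSubst F := .of_constantCoeff_zero' (X_dvd_iff.mp hF)
  nth_rw 1 [f.eq_X_pow_mul_shift_add_trunc (n + 1)]
  rw [subst_add hs, subst_mul hs, subst_pow hs, subst_X hs, subst_coe hs, Polynomial.aeval_def,
    eval₂_trunc_eq_sum_range, algebraMap_eq, add_sub_cancel_right]
  exact dvd_mul_of_dvd_left (pow_dvd_pow_of_dvd hF _) _

theorem coeff_mul_subst_eq_sum {F : R⟦X⟧} (hF : X ∣ F) (G f : R⟦X⟧) (n : ℕ) :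
    coeff n (G * subst F f) = ∑ k ∈ range (n + 1), coeff n (G * F ^ k) * coeff k f := by
  obtain ⟨q, hq⟩ := X_pow_dvd_subst_sub_sum hF f n
  rw [eq_add_of_sub_eq hq, mul_add, map_add, mul_left_comm, coeff_X_pow_mul', if_neg (by omega),
    zero_add, mul_sum, map_sum]
  refine sum_congr rfl fun k _ => ?_
  rw [mul_left_comm, coeff_C_mul, mul_comm]

theorem coeff_eq_sum_of_mul_one_sub_eq {W f g : R⟦X⟧} {r : R} (hf : X ∣ f)
    (h : W * (1 - C r * f) = g) (n : ℕ) :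
    coeff n W = ∑ k ∈ range (n + 1), r ^ k * coeff n (g * f ^ k) := by
  have hgeom : W = g * ∑ k ∈ range (n + 1), (C r * f) ^ k + W * (C r * f) ^ (n + 1) := by
    rw [← h, mul_assoc, mul_neg_geom_sum]; ring
  have htail : coeff n (W * (C r * f) ^ (n + 1)) = 0 := by
    obtain ⟨q, hq⟩ := pow_dvd_pow_of_dvd (dvd_mul_of_dvd_right hf (C r)) (n + 1)
    rw [hq, mul_left_comm, coeff_X_pow_mul', if_neg (by omega)]
  rw [hgeom, map_add, htail, add_zero, mul_sum, map_sum]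
  refine sum_congr rfl fun k _ => ?_
  rw [mul_pow, ← map_pow, mul_left_comm, coeff_C_mul]

theorem subst_eq_one_add_X {v c : R⟦X⟧} (hv : (1 + X) * v = 1) (hc : c = 1 + X * c ^ 2) :
    subst (X * v ^ 2) c = 1 + X := by
  have hF : X ∣ X * v ^ 2 := dvd_mul_right X _
  have hs : HasSubst (X * v ^ 2) := .of_constantCoeff_zero' (X_dvd_iff.mp hF)
  refine eq_of_eq_add_mul_sq hF (a := 1) ?_ ?_
  · conv_lhs => rw [hc]
    rw [subst_add hs, subst_mul hs, subst_pow hs, subst_X hs, ← map_one (C (R := R)), subst_C]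
    rfl
  · linear_combination (-X * ((1 + X) * v + 1)) * hv

theorem mul_subst_eq_one {v c W : R⟦X⟧} (r : R) (hv : (1 + X) * v = 1) (hc : c = 1 + X * c ^ 2)
    (hW : W * (1 + C r * X * c ^ 3) = c ^ 2) :
    (1 + C r * X + C r * X ^ 2) * v ^ 2 * subst (X * v ^ 2) W = 1 := by
  have hs : HasSubst (X * v ^ 2) := .of_constantCoeff_zero' (by simp)
  have hsW : subst (X * v ^ 2) W * (1 + C r * X * (1 + X)) = (1 + X) ^ 2 := by
    have hC (a : R) : subst (X * v ^ 2) (C a) = C a := subst_C a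
    have h := congrArg (substAlgHom hs) hW
    simp only [map_mul, map_add, map_one, map_pow, substAlgHom_X, coe_substAlgHom, hC,
      subst_eq_one_add_X hv hc] at h
    linear_combination h - subst (X * v ^ 2) W * C r * X * (1 + X) * ((1 + X) * v + 1) * hv
  have hN : IsUnit (1 + C r * X + C r * X ^ 2 : R⟦X⟧) := isUnit_iff_constantCoeff.mpr (by simp)
  refine hN.mul_right_cancel ?_
  linear_combination (1 + C r * X + C r * X ^ 2) * v ^ 2 * hsW
    + (1 + C r * X + C r * X ^ 2) * ((1 + X) * v + 1) * hv

end PowerSeries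

theorem eq_of_forall_sum_range_mul_eq {R : Type*} [Ring R] {M : ℕ → ℕ → R}
    (hM : ∀ n, M n n = 1) {a b : ℕ → R}
    (h : ∀ n, ∑ k ∈ range (n + 1), M n k * a k = ∑ k ∈ range (n + 1), M n k * b k)
    (n : ℕ) :
    a n = b n := by
  induction n using Nat.strong_induction_on with
  | _ n ih =>
    have hn := h n
    rw [sum_range_succ, sum_range_succ, hM, one_mul, one_mul,
      sum_congr rfl fun k hk => by rw [ih k (mem_range.mp hk)]] at hn
    exact add_left_cancel hn

theorem stmt11_general (c : PowerSeries ℚ)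
    (hc : c = 1 + PowerSeries.X * c ^ 2)
    (v : PowerSeries (Polynomial ℚ)) (hv : (1 + PowerSeries.X) * v = 1)
    (M : ℕ → ℕ → Polynomial ℚ)
    (hM : ∀ n k : ℕ, M n k =
      PowerSeries.coeff (R := Polynomial ℚ) n
        ((1 + PowerSeries.C (R := Polynomial ℚ) Polynomial.X * PowerSeries.X +
            PowerSeries.C (R := Polynomial ℚ) Polynomial.X * PowerSeries.X ^ 2) * v ^ 2 *
          (PowerSeries.X * v ^ 2) ^ k))
    (μ : ℕ → Polynomial ℚ)
    (hμ : ∀ n : ℕ, ∑ k ∈ Finset.range (n + 1), M n k * μ k = if n = 0 then 1 else 0) :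
    ∀ n : ℕ, μ n = ∑ k ∈ Finset.range (n + 1),
      Polynomial.C (PowerSeries.coeff (R := ℚ) n (c ^ 2 * (-(PowerSeries.X * c ^ 3)) ^ k)) *
        Polynomial.X ^ k := by
  set c' := PowerSeries.map Polynomial.C c with hc'_def
  have hc' : c' = 1 + X * c' ^ 2 := by simpa using congrArg (PowerSeries.map Polynomial.C) hc
  have hvc : constantCoeff v = 1 := by simpa using congrArg constantCoeff hv
  obtain ⟨W, hW⟩ : ∃ W, W * (1 + C Polynomial.X * X * c' ^ 3) = c' ^ 2 :=
    ⟨c' ^ 2 * invOfUnit _ 1, by rw [mul_assoc, invOfUnit_mul _ _ (by simp), mul_one]⟩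
  have hμW : ∀ n, μ n = coeff n W := by
    refine eq_of_forall_sum_range_mul_eq (M := M) (fun n => ?_) (fun n => ?_)
    · rw [hM, coeff_mul_X_mul_pow_self]; simp [hvc]
    · rw [hμ, ← coeff_one, ← mul_subst_eq_one _ hv hc' hW,
        coeff_mul_subst_eq_sum (dvd_mul_right X _)]
      simp only [hM]
  intro n
  have hW' : W * (1 - C Polynomial.X * -(X * c' ^ 3)) = c' ^ 2 := by linear_combination hW
  rw [hμW, coeff_eq_sum_of_mul_one_sub_eq (dvd_neg.mpr (dvd_mul_right X _)) hW']
  refine sum_congr rfl fun k _ => ?_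
  have hmap : c' ^ 2 * (-(X * c' ^ 3)) ^ k =
      PowerSeries.map Polynomial.C (c ^ 2 * (-(X * c ^ 3)) ^ k) := by
    simp [hc'_def]
  rw [hmap, coeff_map, mul_comm]

/-- The coefficient array of the moments of the generalized Chebyshev
polynomials defined by the Riordan array `((1+yx+yx²)/(1+x)², x/(1+x)²)` is the
Riordan involution `(c², -x·c³)`, where `c` is the Catalan generating function. -/
theorem stmt11 (c : PowerSeries ℚ) (hc0 : PowerSeries.constantCoeff (R := ℚ) c = 1)
    (hc : c = 1 + PowerSeries.X * c ^ 2)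
    (v : PowerSeries (Polynomial ℚ)) (hv : (1 + PowerSeries.X) * v = 1)
    (M : ℕ → ℕ → Polynomial ℚ)
    (hM : ∀ n k : ℕ, M n k =
      PowerSeries.coeff (R := Polynomial ℚ) n
        ((1 + PowerSeries.C (R := Polynomial ℚ) Polynomial.X * PowerSeries.X +
            PowerSeries.C (R := Polynomial ℚ) Polynomial.X * PowerSeries.X ^ 2) * v ^ 2 *
          (PowerSeries.X * v ^ 2) ^ k))
    (μ : ℕ → Polynomial ℚ)
    (hμ : ∀ n : ℕ, ∑ k ∈ Finset.range (n + 1), M n k * μ k = if n = 0 then 1 else 0) :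
    ∀ n : ℕ, μ n = ∑ k ∈ Finset.range (n + 1),
      Polynomial.C (PowerSeries.coeff (R := ℚ) n (c ^ 2 * (-(PowerSeries.X * c ^ 3)) ^ k)) *
        Polynomial.X ^ k :=
  stmt11_general c hc v hv M hM μ hμ
end

section
/- For n ≥ 0 let ν_n ∈ ℚ[y] be the coefficient of xⁿ in c·(1 + y·x·c³)⁻¹ ∈ (ℚ[y])[[x]] (the moment polynomials μ_n^{(1)}(y), i.e. the row polynomials of the Riordan involution (c, -x·c³)). Then the Hankel transform det(ν_{i+j})_{0≤i,j≤n} equals ∑_{k=0}^{n} (-1)^k·C(2n+1-k, 2n+1-2k)·y^k in ℚ[y], where C denotes the binomial coefficient. -/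
open PowerSeries Finset

open scoped Polynomial

/-!
Write `F = c / (1 + y x c³)`. Polynomials `P_i` of degree `≤ i` with `P_i F = D_i + x^{2i} G_i`,
`deg D_i < i`, are orthogonal for the moment functional of `F` after reversal, so the lower
triangular matrix of their reversed coefficients conjugates the Hankel matrix of `F` to the
diagonal matrix with entries `P_i(0) G_i(0)`: `det H · ∏ P_i(0)² = ∏ P_i(0) G_i(0)`.

Such `P_i` are the (reversed, denominator-cleared) convergent denominators of the J-fraction of
`F`. Their three-term recurrence has coefficients built from the values `h_n = hankelPoly n`, which
obey `h_{n+2} = (1 - 2y) h_{n+1} - y² h_n`; after substituting `x c² = c - 1` the remainders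
`x^{2i} G_i` satisfy the same recurrence, and the diagonal entries telescope to `h_n ∏ P_i(0)²`.
-/

theorem Nat.choose_add_two_add_choose (M k : ℕ) :
    (M + 2).choose (k + 2) + M.choose k = M.choose (k + 2) + 2 * (M + 1).choose (k + 1) := by
  have h1 : (M + 2).choose (k + 2) = (M + 1).choose (k + 1) + (M + 1).choose (k + 2) :=
    Nat.choose_succ_succ _ _
  have h2 : (M + 1).choose (k + 2) = M.choose (k + 1) + M.choose (k + 2) :=
    Nat.choose_succ_succ _ _
  have h3 : (M + 1).choose (k + 1) = M.choose k + M.choose (k + 1) :=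
    Nat.choose_succ_succ _ _
  omega

noncomputable section

namespace PowerSeries

variable {R : Type*} [CommRing R]

def moment (F : R⟦X⟧) : R[X] →ₗ[R] R :=
  Polynomial.lsum fun m => LinearMap.mulRight R (coeff m F)

theorem moment_monomial (F : R⟦X⟧) (r : R) (m : ℕ) :
    moment F (Polynomial.monomial m r) = r * coeff m F := by
  simp [moment, Polynomial.sum_monomial_index]

theorem coeff_coe_mul_eq_moment_reflect (F : R⟦X⟧) {N : ℕ} {p : R[X]} (hp : p.natDegree ≤ N) :
    coeff N ((p : R⟦X⟧) * F) = moment F (p.reflect N) := by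
  refine Polynomial.induction_with_natDegree_le
    (fun p => coeff N ((p : R⟦X⟧) * F) = moment F (p.reflect N)) N (by simp) ?_ ?_ p hp
  · intro m r _ hm
    rw [Polynomial.reflect_C_mul_X_pow, Polynomial.revAt_le hm,
      Polynomial.C_mul_X_pow_eq_monomial (n := N - m), moment_monomial, Polynomial.coe_mul,
      Polynomial.coe_C, Polynomial.coe_pow, Polynomial.coe_X, mul_assoc, coeff_C_mul,
      coeff_X_pow_mul', if_pos hm]
  · intro f g _ _ hf hg
    rw [Polynomial.coe_add, add_mul, map_add, hf, hg, Polynomial.reflect_add, map_add]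

theorem moment_mul {a b : R[X]} {n : ℕ} (ha : a.natDegree ≤ n) (hb : b.natDegree ≤ n)
    (F : R⟦X⟧) :
    moment F (a * b) =
      ∑ k ∈ range (n + 1), ∑ l ∈ range (n + 1), a.coeff k * coeff (k + l) F * b.coeff l := by
  conv_lhs => rw [a.as_sum_range' (n + 1) (by omega), b.as_sum_range' (n + 1) (by omega),
    sum_mul_sum]
  simp only [Polynomial.monomial_mul_monomial, map_sum, moment_monomial]
  exact sum_congr rfl fun k _ => sum_congr rfl fun l _ => mul_right_comm _ _ _

def hankel (F : R⟦X⟧) (n : ℕ) : Matrix (Fin (n + 1)) (Fin (n + 1)) R :=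
  Matrix.of fun i j => coeff ((i : ℕ) + j) F

def reflectMatrix (P : ℕ → R[X]) (n : ℕ) : Matrix (Fin (n + 1)) (Fin (n + 1)) R :=
  Matrix.of fun i k => ((P i).reflect i).coeff k

variable {P : ℕ → R[X]}

theorem reflectMatrix_isLowerTriangular (hP : ∀ i, (P i).natDegree ≤ i) (n : ℕ) :
    (reflectMatrix P n).IsLowerTriangular := by
  intro i k hik
  have hik : (i : ℕ) < k := hik
  rw [reflectMatrix, Matrix.of_apply, Polynomial.coeff_reflect, ← Polynomial.revAtFun_eq,
    Polynomial.revAtFun, if_neg hik.not_ge]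
  exact Polynomial.coeff_eq_zero_of_natDegree_lt ((hP i).trans_lt hik)

theorem det_reflectMatrix (hP : ∀ i, (P i).natDegree ≤ i) (n : ℕ) :
    (reflectMatrix P n).det = ∏ i ∈ range (n + 1), (P i).coeff 0 := by
  rw [Matrix.det_of_isLowerTriangular _ (reflectMatrix_isLowerTriangular hP n),
    ← Fin.prod_univ_eq_prod_range]
  simp [reflectMatrix, Polynomial.coeff_reflect]

theorem reflectMatrix_mul_hankel_mul_transpose_apply (hP : ∀ i, (P i).natDegree ≤ i)
    (F : R⟦X⟧) {n : ℕ} (i j : Fin (n + 1)) :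
    (reflectMatrix P n * hankel F n * (reflectMatrix P n).transpose) i j =
      coeff ((i : ℕ) + j) (((P i * P j : R[X]) : R⟦X⟧) * F) := by
  have hdeg (i : Fin (n + 1)) : ((P i).reflect i).natDegree ≤ n :=
    Polynomial.natDegree_reflect_le.trans (max_le i.is_le (hP i |>.trans i.is_le))
  rw [coeff_coe_mul_eq_moment_reflect F
      ((Polynomial.natDegree_mul_le).trans (add_le_add (hP i) (hP j))),
    Polynomial.reflect_mul _ _ (hP i) (hP j), moment_mul (hdeg i) (hdeg j)]
  simp only [Matrix.mul_apply, Matrix.transpose_apply, reflectMatrix, hankel, Matrix.of_apply,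
    sum_mul]
  rw [← Fin.sum_univ_eq_sum_range, Finset.sum_comm]
  refine sum_congr rfl fun k _ => ?_
  rw [← Fin.sum_univ_eq_sum_range (fun l => _ * coeff (k + l) F * _)]

theorem coeff_add_coe_mul_eq_ite {p q D : R[X]} {F G : R⟦X⟧} {i j : ℕ} (hp : p.natDegree ≤ i)
    (hD : D.degree < j) (hq : (q : R⟦X⟧) * F = (D : R⟦X⟧) + X ^ (2 * j) * G) (hij : i ≤ j) :
    coeff (i + j) (((p * q : R[X]) : R⟦X⟧) * F) =
      if i = j then p.coeff 0 * constantCoeff G else 0 := by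
  have hpD : coeff (i + j) ((p * D : R[X]) : R⟦X⟧) = 0 := by
    rw [Polynomial.coeff_coe, Polynomial.coeff_mul_add_eq_of_natDegree_le hp
      (Polynomial.natDegree_le_of_degree_le hD.le), Polynomial.coeff_eq_zero_of_degree_lt hD,
      mul_zero]
  rw [Polynomial.coe_mul, mul_assoc, hq, mul_add, ← Polynomial.coe_mul, map_add, hpD, zero_add,
    mul_left_comm, coeff_X_pow_mul']
  rcases hij.lt_or_eq with hij | rfl
  · rw [if_neg (by omega), if_neg hij.ne]
  · rw [if_pos (by omega), if_pos rfl, show i + i - 2 * i = 0 by omega, coeff_zero_eq_constantCoeff,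
      map_mul, Polynomial.constantCoeff_coe]

theorem prod_sq_mul_det_hankel (hP : ∀ i, (P i).natDegree ≤ i) {D : ℕ → R[X]}
    (hD : ∀ i, (D i).degree < i) {F : R⟦X⟧} {G : ℕ → R⟦X⟧}
    (hPF : ∀ i, (P i : R⟦X⟧) * F = (D i : R⟦X⟧) + X ^ (2 * i) * G i) (n : ℕ) :
    (∏ i ∈ range (n + 1), (P i).coeff 0) ^ 2 * (hankel F n).det =
      ∏ i ∈ range (n + 1), (P i).coeff 0 * constantCoeff (G i) := by
  have hdiag : reflectMatrix P n * hankel F n * (reflectMatrix P n).transpose =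
      Matrix.diagonal fun i : Fin (n + 1) => (P i).coeff 0 * constantCoeff (G i) := by
    ext i j
    rw [reflectMatrix_mul_hankel_mul_transpose_apply hP, Matrix.diagonal_apply]
    rcases le_total (i : ℕ) j with h | h
    · rw [coeff_add_coe_mul_eq_ite (hP i) (hD j) (hPF j) h]
      split_ifs <;> simp_all [Fin.ext_iff]
    · rw [mul_comm (P i), add_comm, coeff_add_coe_mul_eq_ite (hP j) (hD i) (hPF i) h]
      split_ifs <;> simp_all [Fin.ext_iff]
  calc (∏ i ∈ range (n + 1), (P i).coeff 0) ^ 2 * (hankel F n).det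
      = (reflectMatrix P n).det * (hankel F n).det * (reflectMatrix P n).transpose.det := by
        rw [Matrix.det_transpose, det_reflectMatrix hP]
        ring
    _ = ∏ i ∈ range (n + 1), (P i).coeff 0 * constantCoeff (G i) := by
        rw [← Matrix.det_mul, ← Matrix.det_mul, hdiag, Matrix.det_diagonal,
          Fin.prod_univ_eq_prod_range (fun i => (P i).coeff 0 * constantCoeff (G i))]

end PowerSeries

namespace CatalanHankel

local notation "Y" => (Polynomial.X : ℚ[X])

def hankelPoly (n : ℕ) : ℚ[X] :=
  ∑ k ∈ range (n + 1),
    Polynomial.C ((-1 : ℚ) ^ k * ((2 * n + 1 - k).choose (2 * n + 1 - 2 * k) : ℚ)) *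
      Polynomial.X ^ k

theorem coeff_hankelPoly (n k : ℕ) :
    (hankelPoly n).coeff k = (-1) ^ k * ((2 * n + 1 - k).choose k : ℚ) := by
  simp only [hankelPoly, Polynomial.finsetSum_coeff, Polynomial.coeff_C_mul_X_pow,
    sum_ite_eq, mem_range]
  split_ifs with hk
  · rw [show 2 * n + 1 - 2 * k = 2 * n + 1 - k - k by omega, Nat.choose_symm (by omega)]
  · rw [Nat.choose_eq_zero_of_lt (by omega), Nat.cast_zero, mul_zero]

theorem hankelPoly_zero : hankelPoly 0 = 1 := by
  simp [hankelPoly]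

theorem hankelPoly_one : hankelPoly 1 = 1 - 2 * Y := by
  simp [hankelPoly, sum_range_succ, sub_eq_add_neg]

theorem hankelPoly_add_two (n : ℕ) :
    hankelPoly (n + 2) = (1 - 2 * Y) * hankelPoly (n + 1) - Y ^ 2 * hankelPoly n := by
  ext k
  rw [show (1 - 2 * Y) * hankelPoly (n + 1) - Y ^ 2 * hankelPoly n =
      hankelPoly (n + 1) - 2 * (hankelPoly (n + 1) * Y ^ 1) - hankelPoly n * Y ^ 2 by ring]
  simp only [Polynomial.coeff_sub, Polynomial.coeff_ofNat_mul, Polynomial.coeff_mul_X_pow',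
    coeff_hankelPoly]
  rcases k with _ | _ | k
  · simp
  · norm_num [mul_add, sub_eq_add_neg, add_assoc]
  · rw [if_pos (by omega), if_pos (by omega), show k + 1 + 1 - 2 = k by omega,
      show k + 1 + 1 - 1 = k + 1 by omega]
    rcases le_or_gt k (2 * n + 1) with hk | hk
    · obtain ⟨M, hM⟩ : ∃ M, 2 * n + 1 - k = M := ⟨_, rfl⟩
      rw [show 2 * (n + 2) + 1 - (k + 2) = M + 2 by omega,
        show 2 * (n + 1) + 1 - (k + 2) = M by omega,
        show 2 * (n + 1) + 1 - (k + 1) = M + 1 by omega, hM]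
      have h := congrArg (Nat.cast : ℕ → ℚ) (Nat.choose_add_two_add_choose M k)
      push_cast at h
      linear_combination (-1) ^ k * h
    · rw [Nat.choose_eq_zero_of_lt (by omega), Nat.choose_eq_zero_of_lt (by omega),
        Nat.choose_eq_zero_of_lt (by omega), Nat.choose_eq_zero_of_lt (by omega)]
      simp

theorem coeff_zero_hankelPoly (n : ℕ) : (hankelPoly n).coeff 0 = 1 := by
  simp [coeff_hankelPoly]

theorem hankelPoly_ne_zero (n : ℕ) : hankelPoly n ≠ 0 := fun h => by
  simpa [h] using coeff_zero_hankelPoly n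

def beta (i : ℕ) : ℚ[X] :=
  2 * hankelPoly (i + 1) * hankelPoly (i + 2) +
    Y * (hankelPoly (i + 2) * hankelPoly i - hankelPoly (i + 1) ^ 2)

def convStep (i : ℕ) (p p' : ℚ[X][X]) : ℚ[X][X] :=
  (Polynomial.C (hankelPoly (i + 2) * hankelPoly (i + 1)) - Polynomial.C (beta i) * Polynomial.X) *
      p' - Polynomial.C (hankelPoly (i + 2) ^ 2 * hankelPoly i ^ 2) * Polynomial.X ^ 2 * p

def convDen : ℕ → ℚ[X][X]
  | 0 => 1
  | 1 => 1 + Polynomial.C (Y - 1) * Polynomial.X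
  | 2 => Polynomial.C (1 - 2 * Y) + Polynomial.C (8 * Y - 2 * Y ^ 2 - 3) * Polynomial.X +
      Polynomial.C (1 - 3 * Y + Y ^ 2) * Polynomial.X ^ 2
  | i + 3 => convStep i (convDen (i + 1)) (convDen (i + 2))

def convNum : ℕ → ℚ[X][X]
  | 0 => 0
  | 1 => 1
  | 2 => Polynomial.C (1 - 2 * Y) + Polynomial.C (5 * Y - 2) * Polynomial.X
  | i + 3 => convStep i (convNum (i + 1)) (convNum (i + 2))

theorem natDegree_convStep (i : ℕ) {p p' : ℚ[X][X]} {d : ℕ} (hp : p.natDegree ≤ d)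
    (hp' : p'.natDegree ≤ d + 1) : (convStep i p p').natDegree ≤ d + 2 := by
  unfold convStep
  compute_degree
  omega

theorem natDegree_convDen : ∀ i, (convDen i).natDegree ≤ i
  | 0 => by simp [convDen]
  | 1 => by unfold convDen; compute_degree!
  | 2 => by unfold convDen; compute_degree!
  | i + 3 => natDegree_convStep i (natDegree_convDen (i + 1)) (natDegree_convDen (i + 2))

theorem natDegree_convNum_succ : ∀ i, (convNum (i + 1)).natDegree ≤ i
  | 0 => by simp [convNum]
  | 1 => by unfold convNum; compute_degree!
  | i + 2 => natDegree_convStep i (natDegree_convNum_succ i) (natDegree_convNum_succ (i + 1))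

theorem degree_convNum_lt : ∀ i, (convNum i).degree < i
  | 0 => by simp [convNum]
  | i + 1 => Polynomial.degree_le_natDegree.trans_lt
      (by exact_mod_cast (natDegree_convNum_succ i).trans_lt i.lt_succ_self)

def scale (i : ℕ) : ℚ[X] :=
  ∏ k ∈ range i, hankelPoly k ^ 2

theorem scale_succ (i : ℕ) : scale (i + 1) = scale i * hankelPoly i ^ 2 :=
  prod_range_succ _ _

theorem coeff_zero_convStep (i : ℕ) (p p' : ℚ[X][X]) :
    (convStep i p p').coeff 0 = hankelPoly (i + 2) * hankelPoly (i + 1) * p'.coeff 0 := by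
  simp [convStep, Polynomial.mul_coeff_zero]

theorem coeff_zero_convDen : ∀ i, (convDen (i + 1)).coeff 0 = scale i * hankelPoly i
  | 0 => by simp [convDen, scale, hankelPoly_zero]
  | 1 => by simp [convDen, scale, hankelPoly_zero, hankelPoly_one]
  | i + 2 => by
    rw [convDen, coeff_zero_convStep, coeff_zero_convDen (i + 1)]
    simp only [scale_succ]
    ring

theorem three_term_identity {A : Type*} [CommRing A] {a b d e y : A} (c : A)
    (hd : d = (1 - 2 * y) * b - y ^ 2 * a) (he : e = (1 - 2 * y) * d - y ^ 2 * b) :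
    (d * b * c ^ 2 - (2 * b * d + y * (d * a - b ^ 2)) * (c - 1)) * (d - y * b * (c - 1)) -
        d ^ 2 * (b - y * a * (c - 1)) =
      b ^ 2 * (c - 1) ^ 2 * (e - y * d * (c - 1)) := by
  subst he hd
  ring

variable {c : ℚ[X]⟦X⟧}

def remFactor (c : ℚ[X]⟦X⟧) : ℕ → ℚ[X]⟦X⟧
  | 0 => c
  | i + 1 => C (scale i) * c ^ (2 * i + 3) *
      (C (hankelPoly (i + 1)) - C (Y * hankelPoly i) * (c - 1))

theorem coe_convStep (i : ℕ) (p p' : ℚ[X][X]) :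
    ((convStep i p p' : ℚ[X][X]) : ℚ[X]⟦X⟧) =
      (C (hankelPoly (i + 2) * hankelPoly (i + 1)) - C (beta i) * X) * (p' : ℚ[X]⟦X⟧) -
        C (hankelPoly (i + 2) ^ 2 * hankelPoly i ^ 2) * X ^ 2 * (p : ℚ[X]⟦X⟧) := by
  simp [convStep]

theorem X_pow_mul_remFactor_add_three (hc : c = 1 + X * c ^ 2) (i : ℕ) :
    X ^ (2 * (i + 3)) * remFactor c (i + 3) =
      (C (hankelPoly (i + 2) * hankelPoly (i + 1)) - C (beta i) * X) *
          (X ^ (2 * (i + 2)) * remFactor c (i + 2)) -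
        C (hankelPoly (i + 2) ^ 2 * hankelPoly i ^ 2) * X ^ 2 *
          (X ^ (2 * (i + 1)) * remFactor c (i + 1)) := by
  have hd := congrArg C (hankelPoly_add_two i)
  have he := congrArg C (hankelPoly_add_two (i + 1))
  simp only [map_sub, map_mul, map_pow, map_ofNat, map_one] at hd he
  -- the bracket of `remFactor` obeys the recurrence once `X * c ^ 2` is replaced by `c - 1`
  have key := three_term_identity c hd he
  simp only [remFactor, scale_succ, beta, map_sub, map_mul, map_pow, map_add, map_ofNat]
  set a := C (hankelPoly i)
  set b := C (hankelPoly (i + 1))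
  set d := C (hankelPoly (i + 2))
  set e := C (hankelPoly (i + 3))
  set y := C Y
  set P := C (scale i) * a ^ 2 * X ^ (2 * i + 4) * c ^ (2 * i + 3)
  linear_combination (-P * (b ^ 2 * (X * c ^ 2 + (c - 1)) * (e - y * d * (c - 1)) +
    (2 * b * d + y * (d * a - b ^ 2)) * (d - y * b * (c - 1)))) * hc - P * key

theorem convDen_mul_eq (hc : c = 1 + X * c ^ 2) : ∀ i,
    (convDen i : ℚ[X]⟦X⟧) * c =
      (convNum i : ℚ[X]⟦X⟧) * (1 + C Y * X * c ^ 3) + X ^ (2 * i) * remFactor c i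
  | 0 => by simp [convDen, convNum, remFactor]
  | 1 => by
    simp only [convDen, convNum, remFactor, scale, prod_range_zero, zero_add, hankelPoly_zero,
      hankelPoly_one, Polynomial.coe_add, Polynomial.coe_mul, Polynomial.coe_C, Polynomial.coe_X,
      Polynomial.coe_one]
    simp only [map_sub, map_mul, map_one, map_ofNat]
    set y := C Y
    -- each certificate is the quotient of the difference of the two sides by `c - 1 - X * c ^ 2`
    linear_combination (1 + X * c - X * c * y - X * c ^ 2 * y) * hc
  | 2 => by
    simp only [convDen, convNum, remFactor, scale, prod_range_one, zero_add, hankelPoly_add_two 0,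
      hankelPoly_zero, hankelPoly_one, Polynomial.coe_add, Polynomial.coe_mul, Polynomial.coe_pow,
      Polynomial.coe_C, Polynomial.coe_X]
    simp only [map_add, map_sub, map_mul, map_pow, map_one, map_ofNat]
    set y := C Y
    linear_combination (1 - 2 * y + 5 * X * y - 2 * X + X * c - 3 * X * c * y + 2 * X * c * y ^ 2
      - X * c ^ 2 * y + 2 * X * c ^ 2 * y ^ 2 - X ^ 2 * c + 3 * X ^ 2 * c * y - X ^ 2 * c * y ^ 2
      + X ^ 2 * c ^ 2 - 2 * X ^ 2 * c ^ 2 * y - X ^ 2 * c ^ 2 * y ^ 2 - X ^ 2 * c ^ 3 * y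
      + 2 * X ^ 2 * c ^ 3 * y ^ 2 + X ^ 3 * c ^ 3 - 3 * X ^ 3 * c ^ 3 * y + X ^ 3 * c ^ 3 * y ^ 2
      - X ^ 3 * c ^ 4 * y + 2 * X ^ 3 * c ^ 4 * y ^ 2) * hc
  | i + 3 => by
    rw [convDen, convNum, coe_convStep, coe_convStep]
    linear_combination
      (C (hankelPoly (i + 2) * hankelPoly (i + 1)) - C (beta i) * X) * convDen_mul_eq hc (i + 2) -
        C (hankelPoly (i + 2) ^ 2 * hankelPoly i ^ 2) * X ^ 2 * convDen_mul_eq hc (i + 1) -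
        X_pow_mul_remFactor_add_three hc i

theorem constantCoeff_remFactor_succ (hc0 : constantCoeff c = 1) (i : ℕ) :
    constantCoeff (remFactor c (i + 1)) = scale i * hankelPoly (i + 1) := by
  simp [remFactor, hc0]

theorem prod_coeff_zero_convDen_mul_constantCoeff (hc0 : constantCoeff c = 1) (n : ℕ) :
    ∏ i ∈ range (n + 1), (convDen i).coeff 0 * constantCoeff (remFactor c i) =
      (∏ i ∈ range (n + 1), (convDen i).coeff 0) ^ 2 * hankelPoly n := by
  induction n with
  | zero => simp [convDen, remFactor, hc0, hankelPoly_zero]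
  | succ n ih =>
    rw [prod_range_succ, ih, prod_range_succ (fun i => (convDen i).coeff 0) (n + 1),
      coeff_zero_convDen, constantCoeff_remFactor_succ hc0]
    ring

theorem prod_coeff_zero_convDen_ne_zero (n : ℕ) : ∏ i ∈ range (n + 1), (convDen i).coeff 0 ≠ 0 :=
  prod_ne_zero_iff.mpr fun i _ => match i with
    | 0 => by simp [convDen]
    | i + 1 => by
      rw [coeff_zero_convDen]
      exact mul_ne_zero (prod_ne_zero_iff.mpr fun k _ => pow_ne_zero _ (hankelPoly_ne_zero k))
        (hankelPoly_ne_zero i)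

end CatalanHankel

end

open CatalanHankel in
/-- The Hankel transform of the moment polynomials `μ_n^{(1)}(y)`, the
coefficients of `c·(1+yxc³)⁻¹`, equals `∑_{k=0}^{n} (-1)^k·C(2n+1-k, 2n+1-2k)·y^k`
in `ℚ[y]`. -/
theorem stmt14 (c : PowerSeries (Polynomial ℚ))
    (hc0 : PowerSeries.constantCoeff c = 1)
    (hc : c = 1 + PowerSeries.X * c ^ 2)
    (u : PowerSeries (Polynomial ℚ))
    (hu : (1 + PowerSeries.C (Polynomial.X : Polynomial ℚ) * PowerSeries.X * c ^ 3) * u = 1)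
    (ν : ℕ → Polynomial ℚ)
    (hν : ∀ n : ℕ, ν n = PowerSeries.coeff n (c * u)) :
    ∀ n : ℕ,
      (Matrix.of fun i j : Fin (n + 1) => ν ((i : ℕ) + (j : ℕ))).det =
        ∑ k ∈ Finset.range (n + 1),
          Polynomial.C ((-1 : ℚ) ^ k * ((2 * n + 1 - k).choose (2 * n + 1 - 2 * k) : ℚ)) *
            Polynomial.X ^ k := by
  intro n
  have hu0 : constantCoeff u = 1 := by simpa using congrArg constantCoeff hu
  have hPF (i : ℕ) : (convDen i : ℚ[X]⟦X⟧) * (c * u) =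
      (convNum i : ℚ[X]⟦X⟧) + X ^ (2 * i) * (remFactor c i * u) := by
    linear_combination u * convDen_mul_eq hc i + (convNum i : ℚ[X]⟦X⟧) * hu
  have hH : Matrix.of (fun i j : Fin (n + 1) => ν ((i : ℕ) + (j : ℕ))) = hankel (c * u) n := by
    ext i j
    simp [hankel, hν]
  have key := prod_sq_mul_det_hankel natDegree_convDen degree_convNum_lt hPF n
  simp only [map_mul, hu0, mul_one, prod_coeff_zero_convDen_mul_constantCoeff hc0] at key
  rw [hH]
  exact mul_left_cancel₀ (pow_ne_zero 2 (prod_coeff_zero_convDen_ne_zero n)) key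
end
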